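/- arXiv:0905.0829 — 2 statements merged into one kernel-verified Lean document; each statement's English description precedes it below -/
import Mathlib

section
/- Let α > 0, β > 0, and K̃ > 2(α+β) satisfy 2β ∑_{n=1}^∞ 1/(K̃ n² − 2α) = 1. Then equality in α ∑ (x_n+y_n)²/n² + β (∑ (x_n+y_n)/n)² ≤ K̃ (∑ x_n² + ∑ y_n²) holds if and only if there exists C ∈ ℝ with x_n = y_n = C/(K̃ n − 2α/n) for all n ≥ 1. -/
/-!
Write `s = x + y` and `p n = K̃ - 2α/n² > 0`. Pointwise
`K̃ (x² + y²) = (K̃/2) (x - y)² + (p n / 2) s² + α s²/n²`, so the equality case is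
`∑ (K̃/2) (x - y)² + (∑ p s² - 2β (∑ s/n)²) / 2 = 0`.
The hypothesis on `K̃` says `∑ (1/n)² / p n = 1/(2β)`, and for positive weights `p` and a
vector `v` with `∑ v²/p = 1/β'`, completing the square gives
`∑ p s² - β' (∑ s v)² = ∑ p (s - c v/p)²` with `c = β' ∑ s v`.
Both sums have nonnegative terms, so equality holds iff `x = y` and `s` is proportional to
`v/p = 1/(K̃ n - 2α/n)`.
-/

section RankOnePerturbation

variable {ι : Type*} {p v s : ι → ℝ} {β : ℝ}

theorem abs_mul_le_sq_div_add_mul_sq {a b q : ℝ} (hq : 0 < q) :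
    |a * b| ≤ (a ^ 2 / q + q * b ^ 2) / 2 := by
  have key : a ^ 2 / q + q * b ^ 2 - 2 * |a * b| = (|a| - q * |b|) ^ 2 / q := by
    rw [abs_mul]
    field_simp
    ring_nf
    rw [sq_abs, sq_abs]
    ring
  have : 0 ≤ (|a| - q * |b|) ^ 2 / q := by positivity
  linarith

theorem summable_mul_of_summable_sq_div (hp : ∀ i, 0 < p i)
    (hv : Summable fun i => v i ^ 2 / p i) (hs : Summable fun i => p i * s i ^ 2) :
    Summable fun i => s i * v i :=
  .of_norm_bounded ((hv.add hs).div_const 2) fun i => by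
    rw [Real.norm_eq_abs, mul_comm]
    exact abs_mul_le_sq_div_add_mul_sq (hp i)

theorem hasSum_mul_sq_sub_mul_div (hp : ∀ i, p i ≠ 0)
    (hv : HasSum (fun i => v i ^ 2 / p i) β⁻¹)
    (hs : Summable fun i => p i * s i ^ 2) (hsv : Summable fun i => s i * v i) :
    HasSum (fun i => p i * (s i - β * (∑' j, s j * v j) * (v i / p i)) ^ 2)
      (∑' i, p i * s i ^ 2 - β * (∑' i, s i * v i) ^ 2) := by
  set c := β * ∑' j, s j * v j
  have expand : ∀ i, p i * (s i - c * (v i / p i)) ^ 2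
      = p i * s i ^ 2 - 2 * c * (s i * v i) + c ^ 2 * (v i ^ 2 / p i) := fun i => by
    field_simp [hp i]
    ring
  have value : ∑' i, p i * s i ^ 2 - β * (∑' i, s i * v i) ^ 2
      = ∑' i, p i * s i ^ 2 - 2 * c * ∑' i, s i * v i + c ^ 2 * β⁻¹ := by
    have : β ^ 2 * β⁻¹ = β := by rw [sq, mul_self_mul_inv]
    linear_combination -(∑' i, s i * v i) ^ 2 * this
  rw [value]
  exact ((hs.hasSum.sub (hsv.hasSum.mul_left (2 * c))).add (hv.mul_left (c ^ 2))).congr_fun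
    expand

theorem mul_sq_tsum_mul_le_tsum_mul_sq (hp : ∀ i, 0 < p i)
    (hv : HasSum (fun i => v i ^ 2 / p i) β⁻¹)
    (hs : Summable fun i => p i * s i ^ 2) :
    β * (∑' i, s i * v i) ^ 2 ≤ ∑' i, p i * s i ^ 2 := by
  have hsv := summable_mul_of_summable_sq_div hp hv.summable hs
  have := (hasSum_mul_sq_sub_mul_div (fun i => (hp i).ne') hv hs hsv).nonneg
    fun i => mul_nonneg (hp i).le (sq_nonneg _)
  linarith

theorem mul_sq_tsum_mul_eq_tsum_mul_sq_iff (hp : ∀ i, 0 < p i)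
    (hv : HasSum (fun i => v i ^ 2 / p i) β⁻¹) (hs : Summable fun i => p i * s i ^ 2) :
    β * (∑' i, s i * v i) ^ 2 = ∑' i, p i * s i ^ 2 ↔ ∃ C, ∀ i, s i = C * (v i / p i) := by
  constructor
  · intro h
    have hsv := summable_mul_of_summable_sq_div hp hv.summable hs
    have hzero := hasSum_mul_sq_sub_mul_div (fun i => (hp i).ne') hv hs hsv
    rw [← h, sub_self, hasSum_zero_iff_of_nonneg fun i => mul_nonneg (hp i).le (sq_nonneg _)]
      at hzero
    refine ⟨β * ∑' j, s j * v j, fun i => ?_⟩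
    simpa only [Pi.zero_apply, mul_eq_zero, (hp i).ne', false_or, pow_eq_zero_iff two_ne_zero,
      sub_eq_zero] using congrFun hzero i
  · rintro ⟨C, hC⟩
    have hsv : ∀ i, s i * v i = C * (v i ^ 2 / p i) := fun i => by
      rw [hC]; field_simp [(hp i).ne']
    have hps : ∀ i, p i * s i ^ 2 = C ^ 2 * (v i ^ 2 / p i) := fun i => by
      rw [hC]; field_simp [(hp i).ne']
    rw [tsum_congr hsv, tsum_congr hps, tsum_mul_left, tsum_mul_left, hv.tsum_eq]
    rcases eq_or_ne β 0 with rfl | hβ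
    · simp
    · field_simp

end RankOnePerturbation

section SquareSummable

variable {ι : Type*} {f g : ι → ℝ}

theorem summable_sq_add (hf : Summable fun i => f i ^ 2) (hg : Summable fun i => g i ^ 2) :
    Summable fun i => (f i + g i) ^ 2 :=
  .of_nonneg_of_le (fun _ => sq_nonneg _) (fun _ => add_sq_le) ((hf.add hg).mul_left 2)

theorem summable_sq_sub (hf : Summable fun i => f i ^ 2) (hg : Summable fun i => g i ^ 2) :
    Summable fun i => (f i - g i) ^ 2 := by
  simpa only [sub_eq_add_neg] using summable_sq_add hf (by simpa only [neg_sq] using hg)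

theorem tsum_mul_sq_sub_eq_zero_iff {c : ℝ} (hc : 0 < c) (hf : Summable fun i => f i ^ 2)
    (hg : Summable fun i => g i ^ 2) :
    ∑' i, c * (f i - g i) ^ 2 = 0 ↔ ∀ i, f i = g i := by
  rw [tsum_mul_left, mul_eq_zero, or_iff_right hc.ne', ← (summable_sq_sub hf hg).hasSum_iff,
    hasSum_zero_iff_of_nonneg fun _ => sq_nonneg _, funext_iff]
  simp only [Pi.zero_apply, pow_eq_zero_iff two_ne_zero, sub_eq_zero]

end SquareSummable

section PNatWeights

variable {f : ℕ+ → ℝ}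

theorem one_le_natCast_pnat_sq (n : ℕ+) : (1 : ℝ) ≤ ((n : ℕ) : ℝ) ^ 2 :=
  one_le_pow₀ (Nat.one_le_cast.mpr n.pos)

theorem summable_sq_div_natCast_sq (hf : Summable fun n => f n ^ 2) :
    Summable fun n : ℕ+ => f n ^ 2 / ((n : ℕ) : ℝ) ^ 2 :=
  .of_nonneg_of_le (fun _ => by positivity)
    (fun n => div_le_self (sq_nonneg _) (one_le_natCast_pnat_sq n)) hf

theorem summable_sub_div_sq_mul_sq {K c : ℝ} (hf : Summable fun n => f n ^ 2) :
    Summable fun n : ℕ+ => (K - c / ((n : ℕ) : ℝ) ^ 2) * f n ^ 2 :=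
  ((hf.mul_left K).sub ((summable_sq_div_natCast_sq hf).mul_left c)).congr fun n => by ring

theorem mul_tsum_sq_add_tsum_sq_eq {K α : ℝ} {x y : ℕ+ → ℝ}
    (hx : Summable fun n => x n ^ 2) (hy : Summable fun n => y n ^ 2) :
    K * ((∑' n, x n ^ 2) + ∑' n, y n ^ 2)
      = ∑' n, K / 2 * (x n - y n) ^ 2
        + (∑' n : ℕ+, (K - 2 * α / ((n : ℕ) : ℝ) ^ 2) * (x n + y n) ^ 2) / 2
        + α * ∑' n : ℕ+, (x n + y n) ^ 2 / ((n : ℕ) : ℝ) ^ 2 := by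
  have hxy := summable_sq_add hx hy
  rw [← hx.tsum_add hy, ← tsum_mul_left, ← tsum_div_const, ← tsum_mul_left,
    ← Summable.tsum_add ((summable_sq_sub hx hy).mul_left _)
      ((summable_sub_div_sq_mul_sq hxy).div_const 2),
    ← Summable.tsum_add (((summable_sq_sub hx hy).mul_left _).add
      ((summable_sub_div_sq_mul_sq hxy).div_const 2))
      ((summable_sq_div_natCast_sq hxy).mul_left α)]
  exact tsum_congr fun n => by ring

theorem hasSum_inv_sq_div_sub_div_sq {K α β : ℝ}
    (h : 2 * β * ∑' n : ℕ+, 1 / (K * ((n : ℕ) : ℝ) ^ 2 - 2 * α) = 1) :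
    HasSum (fun n : ℕ+ => ((n : ℕ) : ℝ)⁻¹ ^ 2 / (K - 2 * α / ((n : ℕ) : ℝ) ^ 2))
      (2 * β)⁻¹ := by
  have hsum : Summable fun n : ℕ+ => 1 / (K * ((n : ℕ) : ℝ) ^ 2 - 2 * α) := by
    by_contra hns
    rw [tsum_eq_zero_of_not_summable hns, mul_zero] at h
    exact zero_ne_one h
  convert hsum.hasSum_iff.mpr (eq_inv_of_mul_eq_one_right h) using 2 with n
  field_simp

end PNatWeights

theorem inv_div_sub_div_sq {a K c : ℝ} (ha : a ≠ 0) :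
    a⁻¹ / (K - c / a ^ 2) = (K * a - c / a)⁻¹ := by
  rw [div_eq_mul_inv, ← mul_inv_rev]
  congr 1
  field_simp

theorem exists_eq_mul_and_eq_mul_iff {ι : Type*} {x y q : ι → ℝ} :
    (∃ C, ∀ i, x i = C * q i ∧ y i = C * q i) ↔
      (∀ i, x i = y i) ∧ ∃ C, ∀ i, x i + y i = C * q i := by
  constructor
  · rintro ⟨C, hC⟩
    refine ⟨fun i => (hC i).1.trans (hC i).2.symm, 2 * C, fun i => ?_⟩
    rw [(hC i).1, (hC i).2]
    ring
  · rintro ⟨hxy, C, hC⟩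
    refine ⟨C / 2, fun i => ?_⟩
    have := hC i
    rw [hxy i] at this ⊢
    constructor <;> linarith

theorem stmt_4 (α β Kt : ℝ) (hα : 0 < α) (hβ : 0 < β) (hKt : Kt > 2 * (α + β))
    (hKeq : 2 * β * ∑' n : ℕ+, 1 / (Kt * ((n : ℕ) : ℝ) ^ 2 - 2 * α) = 1)
    (x y : ℕ+ → ℝ) (hx : Summable fun n : ℕ+ => (x n) ^ 2)
    (hy : Summable fun n : ℕ+ => (y n) ^ 2) :
    α * ∑' n : ℕ+, (x n + y n) ^ 2 / ((n : ℕ) : ℝ) ^ 2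
      + β * (∑' n : ℕ+, (x n + y n) / ((n : ℕ) : ℝ)) ^ 2
      = Kt * ((∑' n : ℕ+, (x n) ^ 2) + ∑' n : ℕ+, (y n) ^ 2)
    ↔ ∃ C : ℝ, ∀ n : ℕ+,
        x n = C / (Kt * ((n : ℕ) : ℝ) - 2 * α / ((n : ℕ) : ℝ)) ∧
        y n = C / (Kt * ((n : ℕ) : ℝ) - 2 * α / ((n : ℕ) : ℝ)) := by
  have hp : ∀ n : ℕ+, 0 < Kt - 2 * α / ((n : ℕ) : ℝ) ^ 2 := fun n => by
    have : 2 * α / ((n : ℕ) : ℝ) ^ 2 ≤ 2 * α :=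
      div_le_self (by positivity) (one_le_natCast_pnat_sq n)
    linarith
  have hv := hasSum_inv_sq_div_sub_div_sq hKeq
  have hs := summable_sub_div_sq_mul_sq (K := Kt) (c := 2 * α) (summable_sq_add hx hy)
  have hle := mul_sq_tsum_mul_le_tsum_mul_sq hp hv hs
  have hdiff := tsum_mul_sq_sub_eq_zero_iff (by linarith : 0 < Kt / 2) hx hy
  have hD : 0 ≤ ∑' n : ℕ+, Kt / 2 * (x n - y n) ^ 2 :=
    tsum_nonneg fun n => mul_nonneg (by linarith) (sq_nonneg _)
  simp_rw [mul_tsum_sq_add_tsum_sq_eq (α := α) hx hy, div_eq_mul_inv ((x _ + y _) : ℝ)]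
  calc _ ↔ (∑' n : ℕ+, Kt / 2 * (x n - y n) ^ 2 = 0) ∧
        2 * β * (∑' n : ℕ+, (x n + y n) * ((n : ℕ) : ℝ)⁻¹) ^ 2
          = ∑' n : ℕ+, (Kt - 2 * α / ((n : ℕ) : ℝ) ^ 2) * (x n + y n) ^ 2 := by
        constructor
        · intro h
          constructor <;> linarith
        · rintro ⟨h1, h2⟩
          linarith
    _ ↔ _ := by
      simp_rw [hdiff, mul_sq_tsum_mul_eq_tsum_mul_sq_iff hp hv hs,
        ← exists_eq_mul_and_eq_mul_iff,
        inv_div_sub_div_sq (Nat.cast_ne_zero.mpr (PNat.ne_zero _)), div_eq_mul_inv]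
end

section
/- Let α > 0, β > 0, let k_l be the maximum of α ∑_{n=1}^l x_n²/n² + β (∑_{n=1}^l x_n/n)² on the unit sphere of ℝ^l, and K the unique solution greater than α+β of β ∑_{n=1}^∞ 1/(K n² − α) = 1. Then the sequence (k_l) is nondecreasing and lim_{l→∞} k_l = K. -/
/-!
Write `s_l = ∑_{n ≤ l} 1 / (K n² - α)`. Cauchy–Schwarz with weights `K n² - α` bounds the form
on the unit sphere of `ℝ^l` by `K` whenever `β s_l ≤ 1`, and this holds for every `l` because the
partial sums `s_l` increase to `1 / β`. Conversely, the vector `y_n = n / (K n² - α)`, the eigenvector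
of the limiting problem, gives after normalisation the value `K - s_l (1 - β s_l) / ‖y‖²`, which
tends to `K` since `β s_l → 1`. Padding with a zero coordinate gives monotonicity.
-/

open Finset Filter Topology

noncomputable def quadForm (α β : ℝ) (l : ℕ) (x : ℕ → ℝ) : ℝ :=
  α * ∑ n ∈ Icc 1 l, x n ^ 2 / (n : ℝ) ^ 2 + β * (∑ n ∈ Icc 1 l, x n / (n : ℝ)) ^ 2

def sphereValues (α β : ℝ) (l : ℕ) : Set ℝ :=
  {v | ∃ x : ℕ → ℝ, ∑ n ∈ Icc 1 l, x n ^ 2 = 1 ∧ v = quadForm α β l x}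

noncomputable def secularSum (α K : ℝ) (l : ℕ) : ℝ :=
  ∑ n ∈ Icc 1 l, 1 / (K * (n : ℝ) ^ 2 - α)

theorem tendsto_sum_Icc_one_of_hasSum_pnat {M : Type*} [AddCommMonoid M] [TopologicalSpace M]
    {f : ℕ → M} {a : M} (h : HasSum (fun n : ℕ+ => f n) a) :
    Tendsto (fun l => ∑ n ∈ Icc 1 l, f n) atTop (𝓝 a) := by
  convert (hasSum_pnat_iff_hasSum_succ.1 h).tendsto_sum_nat using 2 with l
  rw [range_eq_Ico, sum_Ico_add' f 0 l 1]
  rfl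

theorem sum_Icc_succ_update_zero {M : Type*} [AddCommMonoid M] (g : ℕ → ℝ → M)
    (hg : ∀ n, g n 0 = 0) (x : ℕ → ℝ) (l : ℕ) :
    ∑ n ∈ Icc 1 (l + 1), g n (Function.update x (l + 1) 0 n) = ∑ n ∈ Icc 1 l, g n (x n) := by
  rw [sum_Icc_succ_top (by omega), Function.update_self, hg, add_zero]
  refine sum_congr rfl fun n hn => ?_
  rw [Function.update_of_ne (by grind)]

theorem sphereValues_subset_succ (α β : ℝ) (l : ℕ) :
    sphereValues α β l ⊆ sphereValues α β (l + 1) := by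
  rintro v ⟨x, hx, rfl⟩
  refine ⟨Function.update x (l + 1) 0, ?_, ?_⟩
  · rw [sum_Icc_succ_update_zero (fun _ t => t ^ 2) (by simp), hx]
  · simp only [quadForm]
    rw [sum_Icc_succ_update_zero (fun n t => t ^ 2 / (n : ℝ) ^ 2) (by simp),
      sum_Icc_succ_update_zero (fun n t => t / (n : ℝ)) (by simp)]

theorem mul_sq_sub_pos {α K : ℝ} (hα : 0 ≤ α) (hK : α < K) {n : ℕ} (hn : 1 ≤ n) :
    0 < K * (n : ℝ) ^ 2 - α := by
  have : (1 : ℝ) ≤ (n : ℝ) ^ 2 := one_le_pow₀ (by exact_mod_cast hn)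
  nlinarith

theorem tendsto_mul_secularSum {α β K : ℝ}
    (hK : β * ∑' n : ℕ+, 1 / (K * ((n : ℕ) : ℝ) ^ 2 - α) = 1) :
    Tendsto (fun l => β * secularSum α K l) atTop (𝓝 1) := by
  -- a non-summable series has `tsum` zero, so `hK` already forces summability
  have hsum : Summable fun n : ℕ+ => 1 / (K * ((n : ℕ) : ℝ) ^ 2 - α) := by
    by_contra h
    rw [tsum_eq_zero_of_not_summable h, mul_zero] at hK
    exact zero_ne_one hK
  rw [← hK]
  exact (tendsto_sum_Icc_one_of_hasSum_pnat hsum.hasSum).const_mul β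

theorem monotone_secularSum {α K : ℝ} (hα : 0 ≤ α) (hK : α < K) :
    Monotone (secularSum α K) := by
  refine monotone_nat_of_le_succ fun l => ?_
  rw [secularSum, secularSum, sum_Icc_succ_top (by omega), le_add_iff_nonneg_right]
  exact one_div_nonneg.2 (mul_sq_sub_pos hα hK (by omega)).le

theorem quadForm_le {α β K : ℝ} (hα : 0 ≤ α) (hβ : 0 ≤ β) (hK : α < K) {l : ℕ}
    (hs : β * secularSum α K l ≤ 1) {x : ℕ → ℝ} (hx : ∑ n ∈ Icc 1 l, x n ^ 2 = 1) :
    quadForm α β l x ≤ K := by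
  set A := ∑ n ∈ Icc 1 l, x n ^ 2 / (n : ℝ) ^ 2
  have hd : ∀ n ∈ Icc 1 l, 0 < K * (n : ℝ) ^ 2 - α :=
    fun n hn => mul_sq_sub_pos hα hK (mem_Icc.1 hn).1
  have hweighted : ∑ n ∈ Icc 1 l, (K * (n : ℝ) ^ 2 - α) * (x n / n) ^ 2 = K - α * A := by
    rw [show K - α * A = ∑ n ∈ Icc 1 l, (K * x n ^ 2 - α * (x n ^ 2 / (n : ℝ) ^ 2)) by
      rw [sum_sub_distrib, ← mul_sum, ← mul_sum, hx, mul_one]]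
    refine sum_congr rfl fun n hn => ?_
    have : (n : ℝ) ≠ 0 := by have := (mem_Icc.1 hn).1; positivity
    field_simp
  have hCS : (∑ n ∈ Icc 1 l, x n / n) ^ 2 ≤ (K - α * A) * secularSum α K l := by
    rw [← hweighted, secularSum]
    refine sum_sq_le_sum_mul_sum_of_sq_le_mul _ (fun n hn => by have := hd n hn; positivity)
      (fun n hn => by have := hd n hn; positivity) fun n hn => ?_
    rw [mul_right_comm, mul_one_div_cancel (hd n hn).ne', one_mul]
  have hA : 0 ≤ K - α * A := by
    rw [← hweighted]
    exact sum_nonneg fun n hn => by have := hd n hn; positivity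
  have : β * (∑ n ∈ Icc 1 l, x n / n) ^ 2 ≤ K - α * A :=
    calc β * (∑ n ∈ Icc 1 l, x n / n) ^ 2 ≤ β * ((K - α * A) * secularSum α K l) :=
          mul_le_mul_of_nonneg_left hCS hβ
      _ = (K - α * A) * (β * secularSum α K l) := by ring
      _ ≤ K - α * A := mul_le_of_le_one_right hA hs
  simp only [quadForm]
  linarith

theorem quadForm_const_mul (α β c : ℝ) (l : ℕ) (x : ℕ → ℝ) :
    quadForm α β l (fun n => c * x n) = c ^ 2 * quadForm α β l x := by
  simp only [quadForm, mul_pow, mul_div_assoc, ← mul_sum]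
  ring

noncomputable def trialVector (α K : ℝ) (n : ℕ) : ℝ :=
  n / (K * (n : ℝ) ^ 2 - α)

theorem quadForm_trialVector {α K : ℝ} (hα : 0 ≤ α) (hK : α < K) (β : ℝ) (l : ℕ) :
    quadForm α β l (trialVector α K) = K * ∑ n ∈ Icc 1 l, trialVector α K n ^ 2
      - secularSum α K l * (1 - β * secularSum α K l) := by
  have hd : ∀ n ∈ Icc 1 l, 0 < K * (n : ℝ) ^ 2 - α :=
    fun n hn => mul_sq_sub_pos hα hK (mem_Icc.1 hn).1
  have hn : ∀ n ∈ Icc 1 l, (n : ℝ) ≠ 0 := fun n hn => by have := (mem_Icc.1 hn).1; positivity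
  have hlin : ∑ n ∈ Icc 1 l, trialVector α K n / n = secularSum α K l :=
    sum_congr rfl fun n h => by
      have := (hd n h).ne'
      unfold trialVector
      field_simp [hn n h]
  have hquad : K * ∑ n ∈ Icc 1 l, trialVector α K n ^ 2
      - α * ∑ n ∈ Icc 1 l, trialVector α K n ^ 2 / (n : ℝ) ^ 2 = secularSum α K l := by
    rw [mul_sum, mul_sum, ← sum_sub_distrib]
    refine sum_congr rfl fun n h => ?_
    have := (hd n h).ne'
    unfold trialVector
    field_simp [hn n h]
  rw [quadForm, hlin]
  linear_combination -hquad

theorem exists_mem_sphereValues_ge {α β K : ℝ} (hα : 0 ≤ α) (hβ : 0 < β) (hK : α < K) {l : ℕ}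
    (hl : 1 ≤ l) (hs : β * secularSum α K l ≤ 1) :
    ∃ v ∈ sphereValues α β l, K - (K - α) ^ 2 * (1 - β * secularSum α K l) / β ≤ v := by
  have hq := quadForm_trialVector hα hK β l
  set s := secularSum α K l
  set N := ∑ n ∈ Icc 1 l, trialVector α K n ^ 2
  have hKα : 0 < K - α := sub_pos.2 hK
  have hN : ((K - α) ^ 2)⁻¹ ≤ N := by
    have h1 : trialVector α K 1 ^ 2 = ((K - α) ^ 2)⁻¹ := by simp [trialVector]
    exact h1 ▸ single_le_sum (f := fun n => trialVector α K n ^ 2) (fun n _ => sq_nonneg _)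
      (mem_Icc.2 ⟨le_rfl, hl⟩)
  have hNpos : 0 < N := lt_of_lt_of_le (by positivity) hN
  have hsN : s * N⁻¹ ≤ (K - α) ^ 2 / β := by
    calc s * N⁻¹ ≤ 1 / β * (K - α) ^ 2 :=
          mul_le_mul ((le_div_iff₀' hβ).2 hs) (inv_le_of_inv_le₀ (by positivity) hN)
            (by positivity) (by positivity)
      _ = (K - α) ^ 2 / β := by ring
  refine ⟨_, ⟨fun n => (√N)⁻¹ * trialVector α K n, ?_, rfl⟩, ?_⟩
  · simp only [mul_pow, ← mul_sum, inv_pow, Real.sq_sqrt hNpos.le]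
    exact inv_mul_cancel₀ hNpos.ne'
  · rw [quadForm_const_mul, hq, inv_pow, Real.sq_sqrt hNpos.le]
    calc K - (K - α) ^ 2 * (1 - β * s) / β = K - (K - α) ^ 2 / β * (1 - β * s) := by ring
      _ ≤ K - s * N⁻¹ * (1 - β * s) := by
          gcongr
      _ = N⁻¹ * (K * N - s * (1 - β * s)) := by field_simp

theorem stmt_6 (α β : ℝ) (hα : 0 < α) (hβ : 0 < β) (k : ℕ → ℝ)
    (hk : ∀ l : ℕ, 1 ≤ l → IsGreatest
      {v : ℝ | ∃ x : ℕ → ℝ, (∑ n ∈ Finset.Icc 1 l, (x n) ^ 2) = 1 ∧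
        v = α * ∑ n ∈ Finset.Icc 1 l, (x n) ^ 2 / (n : ℝ) ^ 2
            + β * (∑ n ∈ Finset.Icc 1 l, x n / (n : ℝ)) ^ 2} (k l))
    (K : ℝ) (hK : K > α + β)
    (hKeq : β * ∑' n : ℕ+, 1 / (K * ((n : ℕ) : ℝ) ^ 2 - α) = 1) :
    (∀ l : ℕ, 1 ≤ l → k l ≤ k (l + 1)) ∧
    Filter.Tendsto k Filter.atTop (nhds K) := by
  have hKα : α < K := by linarith
  have hk' : ∀ l, 1 ≤ l → IsGreatest (sphereValues α β l) (k l) := hk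
  have hs : ∀ l, β * secularSum α K l ≤ 1 :=
    ((monotone_secularSum hα.le hKα).const_mul hβ.le).ge_of_tendsto (tendsto_mul_secularSum hKeq)
  have hupper : ∀ l, 1 ≤ l → k l ≤ K := fun l hl => by
    obtain ⟨x, hx, hkx⟩ := (hk' l hl).1
    exact hkx ▸ quadForm_le hα.le hβ.le hKα (hs l) hx
  have hlower : ∀ l, 1 ≤ l → K - (K - α) ^ 2 * (1 - β * secularSum α K l) / β ≤ k l :=
    fun l hl => by
      obtain ⟨v, hv, hKv⟩ := exists_mem_sphereValues_ge hα.le hβ hKα hl (hs l)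
      exact hKv.trans ((hk' l hl).2 hv)
  have hlim : Tendsto (fun l => K - (K - α) ^ 2 * (1 - β * secularSum α K l) / β) atTop (𝓝 K) := by
    simpa using
      ((((tendsto_mul_secularSum hKeq).const_sub 1).const_mul ((K - α) ^ 2)).div_const β).const_sub K
  refine ⟨fun l hl => (hk' l hl).mono (hk' (l + 1) (by omega)) (sphereValues_subset_succ α β l), ?_⟩
  exact tendsto_of_tendsto_of_tendsto_of_le_of_le' hlim tendsto_const_nhds
    (eventually_atTop.2 ⟨1, hlower⟩) (eventually_atTop.2 ⟨1, hupper⟩)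
end
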